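/- arXiv:1506.00330 — 2 statements merged into one kernel-verified Lean document; each statement's English description precedes it below -/
import Mathlib

section
/- Let Q* be an optimal solution of the SDP: minimize tr(C Q) subject to tr(A Q) = z, tr(Q) ≤ P, Q ⪰ 0, where C ⪰ 0 is diagonal, A = h h† is rank one, 0 ≤ z ≤ P‖h‖², P ≥ 0. Then there exists an optimal solution Q̂ of the same SDP with rank(Q̂) ≤ 1. -/
open Matrix
open scoped ComplexOrder

/-!
Put `v = Q* h` and `Q̂ = v vᴴ / (hᴴ Q* h)`, the Nyström approximation of `Q*` along `h`. It has
rank at most one and `hᴴ Q̂ h = hᴴ Q* h = z`. Cauchy–Schwarz for the semi-inner product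
`(x, y) ↦ xᴴ Q* y` gives `|v k|² ≤ Q*ₖₖ · hᴴ Q* h`, so each diagonal entry of `Q̂` is at most that
of `Q*`. The power constraint and the objective `tr (C Q)`, with `C` diagonal and nonnegative,
only see the diagonal, so `Q̂` is feasible with objective at most that of `Q*`; by optimality of
`Q*` the objectives agree.
-/

def SDPFeasible {M : ℕ} (A : Matrix (Fin M) (Fin M) ℂ) (z P : ℝ)
    (Q : Matrix (Fin M) (Fin M) ℂ) : Prop :=
  Q.PosSemidef ∧ (A * Q).trace = (z : ℂ) ∧ (Q.trace).re ≤ P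

namespace Matrix

variable {n 𝕜 : Type*} [Fintype n] [RCLike 𝕜]

theorem trace_vecMulVec_mul {R : Type*} [CommSemiring R] (a b : n → R) (W : Matrix n n R) :
    (vecMulVec a b * W).trace = b ⬝ᵥ W *ᵥ a := by
  rw [vecMulVec_mul, trace_vecMulVec, dotProduct_comm, dotProduct_mulVec]

theorem trace_diagonal_mul_le_trace_diagonal_mul [DecidableEq n] {R : Type*} [CommSemiring R]
    [PartialOrder R] [IsOrderedRing R] {c : n → R} (hc : ∀ k, 0 ≤ c k)
    {W W' : Matrix n n R} (hW : ∀ k, W k k ≤ W' k k) :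
    (diagonal c * W).trace ≤ (diagonal c * W').trace := by
  simp only [trace, diag_apply, diagonal_mul]
  exact Finset.sum_le_sum fun k _ => mul_le_mul_of_nonneg_left (hW k) (hc k)

theorem PosSemidef.norm_dotProduct_mulVec_sq_le {Q : Matrix n n 𝕜}
    (hQ : Q.PosSemidef) (x y : n → 𝕜) :
    ‖star x ⬝ᵥ Q *ᵥ y‖ ^ 2 ≤
      RCLike.re (star x ⬝ᵥ Q *ᵥ x) * RCLike.re (star y ⬝ᵥ Q *ᵥ y) := by
  let := Q.toSeminormedAddCommGroup hQ
  let := Q.toInnerProductSpace hQ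
  have hinner (u w : n → 𝕜) : inner 𝕜 u w = star u ⬝ᵥ Q *ᵥ w := dotProduct_comm _ _
  calc ‖star x ⬝ᵥ Q *ᵥ y‖ ^ 2 = ‖inner 𝕜 x y‖ * ‖inner 𝕜 y x‖ := by
        rw [norm_inner_symm y x, sq, hinner]
    _ ≤ RCLike.re (inner 𝕜 x x) * RCLike.re (inner 𝕜 y y) := inner_mul_inner_self_le x y
    _ = _ := by rw [hinner, hinner]

theorem PosSemidef.norm_mulVec_apply_sq_le [DecidableEq n] {Q : Matrix n n 𝕜} (hQ : Q.PosSemidef) (y : n → 𝕜) (k : n) :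
    ‖(Q *ᵥ y) k‖ ^ 2 ≤ RCLike.re (Q k k) * RCLike.re (star y ⬝ᵥ Q *ᵥ y) := by
  simpa [mulVec_single] using hQ.norm_dotProduct_mulVec_sq_le (Pi.single k 1) y

/-- When `hᴴ Q h = 0` and `Q ⪰ 0`, also `Q h = 0`, so the junk value `0⁻¹ = 0` acts as the
pseudo-inverse here. -/
noncomputable def nystromApprox (Q : Matrix n n 𝕜) (h : n → 𝕜) : Matrix n n 𝕜 :=
  (star h ⬝ᵥ Q *ᵥ h)⁻¹ • vecMulVec (Q *ᵥ h) (star (Q *ᵥ h))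

theorem rank_nystromApprox_le (Q : Matrix n n 𝕜) (h : n → 𝕜) : (nystromApprox Q h).rank ≤ 1 := by
  rw [nystromApprox, ← smul_vecMulVec]
  exact rank_vecMulVec_le _ _

theorem IsHermitian.dotProduct_nystromApprox_mulVec {Q : Matrix n n 𝕜} (hQ : Q.IsHermitian)
    (h : n → 𝕜) : star h ⬝ᵥ nystromApprox Q h *ᵥ h = star h ⬝ᵥ Q *ᵥ h := by
  have hsymm : star (Q *ᵥ h) ⬝ᵥ h = star h ⬝ᵥ Q *ᵥ h := by
    rw [star_mulVec, ← dotProduct_mulVec, hQ.eq]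
  rw [nystromApprox, smul_mulVec, dotProduct_smul, vecMulVec_mulVec, hsymm, dotProduct_smul,
    MulOpposite.smul_eq_mul_unop, MulOpposite.unop_op, smul_eq_mul, ← mul_assoc]
  exact inv_mul_mul_self _

theorem posSemidef_nystromApprox {Q : Matrix n n 𝕜} (hQ : Q.PosSemidef) (h : n → 𝕜) :
    (nystromApprox Q h).PosSemidef := by
  obtain ⟨r, hr0, hr⟩ := RCLike.nonneg_iff_exists_ofReal.mp (hQ.dotProduct_mulVec_nonneg h)
  refine (posSemidef_vecMulVec_self_star _).smul ?_
  rw [← hr, ← RCLike.ofReal_inv, RCLike.ofReal_nonneg]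
  exact inv_nonneg.mpr hr0

theorem PosSemidef.nystromApprox_apply_self_le [DecidableEq n] {Q : Matrix n n 𝕜}
    (hQ : Q.PosSemidef) (h : n → 𝕜) (k : n) : nystromApprox Q h k k ≤ Q k k := by
  obtain ⟨r, hr0, hr⟩ := RCLike.nonneg_iff_exists_ofReal.mp (hQ.dotProduct_mulVec_nonneg h)
  obtain ⟨q, hq0, hq⟩ := RCLike.nonneg_iff_exists_ofReal.mp (hQ.diag_nonneg (i := k))
  have hcs := hQ.norm_mulVec_apply_sq_le h k
  rw [← hr, ← hq, RCLike.ofReal_re, RCLike.ofReal_re] at hcs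
  have hdiag : nystromApprox Q h k k = ((r⁻¹ * ‖(Q *ᵥ h) k‖ ^ 2 : ℝ) : 𝕜) := by
    rw [nystromApprox, smul_apply, vecMulVec_apply, Pi.star_apply, RCLike.star_def,
      RCLike.mul_conj, ← hr, smul_eq_mul]
    push_cast
    rfl
  rw [hdiag, ← hq, RCLike.ofReal_le_ofReal]
  rcases hr0.eq_or_lt with rfl | hr0
  · simpa using hq0
  · rwa [inv_mul_le_iff₀ hr0, mul_comm]

end Matrix

theorem exists_rank_one_optimal_general {M : ℕ} (h : Fin M → ℂ) (d : Fin M → ℝ)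
    (hd : ∀ k, 0 ≤ d k) (z P : ℝ)
    (C : Matrix (Fin M) (Fin M) ℂ) (hC : C = Matrix.diagonal (fun k => (d k : ℂ)))
    (A : Matrix (Fin M) (Fin M) ℂ) (hA : A = Matrix.vecMulVec h (star h))
    (Qstar : Matrix (Fin M) (Fin M) ℂ)
    (hfeas : SDPFeasible A z P Qstar)
    (hopt : ∀ Q, SDPFeasible A z P Q → ((C * Qstar).trace).re ≤ ((C * Q).trace).re) :
    ∃ Qhat, SDPFeasible A z P Qhat ∧ (C * Qhat).trace = (C * Qstar).trace ∧
      Qhat.rank ≤ 1 := by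
  subst hC hA
  obtain ⟨hQ, hTrA, hTr⟩ := hfeas
  have hdiag := hQ.nystromApprox_apply_self_le h
  have hfeas' : SDPFeasible (vecMulVec h (star h)) z P (nystromApprox Qstar h) := by
    refine ⟨posSemidef_nystromApprox hQ h, ?_, ?_⟩
    · rwa [trace_vecMulVec_mul, hQ.isHermitian.dotProduct_nystromApprox_mulVec,
        ← trace_vecMulVec_mul]
    · exact (Complex.le_def.mp (Finset.sum_le_sum fun k _ => hdiag k)).1.trans hTr
  obtain ⟨hre, him⟩ := Complex.le_def.mp <|
    trace_diagonal_mul_le_trace_diagonal_mul (fun k => Complex.zero_le_real.mpr (hd k)) hdiag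
  exact ⟨_, hfeas', Complex.ext (hre.antisymm (hopt _ hfeas')) him, rank_nystromApprox_le _ _⟩

/-- Any optimal solution of the SDP
`min tr(C Q) s.t. tr(A Q) = z, tr(Q) ≤ P, Q ⪰ 0` (with `C ⪰ 0` diagonal and
`A = h hᴴ` rank one) can be replaced by a rank-one optimal solution. -/
theorem exists_rank_one_optimal {M : ℕ} (h : Fin M → ℂ) (d : Fin M → ℝ)
    (hd : ∀ k, 0 ≤ d k) (z P : ℝ) (hP : 0 ≤ P) (hz : 0 ≤ z)
    (hzP : z ≤ P * ∑ i, ‖h i‖ ^ 2)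
    (C : Matrix (Fin M) (Fin M) ℂ) (hC : C = Matrix.diagonal (fun k => (d k : ℂ)))
    (A : Matrix (Fin M) (Fin M) ℂ) (hA : A = Matrix.vecMulVec h (star h))
    (Qstar : Matrix (Fin M) (Fin M) ℂ)
    (hfeas : SDPFeasible A z P Qstar)
    (hopt : ∀ Q, SDPFeasible A z P Q → ((C * Qstar).trace).re ≤ ((C * Q).trace).re) :
    ∃ Qhat, SDPFeasible A z P Qhat ∧ (C * Qhat).trace = (C * Qstar).trace ∧
      Qhat.rank ≤ 1 :=
  exists_rank_one_optimal_general h d hd z P C hC A hA Qstar hfeas hopt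
end

section
/- Let S ∈ ℝ^{n×n} be a matrix with nonnegative entries. Then there exists a positive weight vector w ∈ ℝⁿ (all wᵢ > 0) such that the weighted-maximum operator norm ‖S‖_∞^w := max_i (1/wᵢ) Σ_j [S]_{ij} w_j is strictly less than 1 if and only if ρ(S) < 1. -/
/-!
If `S w < w` for a positive `w`, then for an eigenvector `v` of `S` with eigenvalue `μ`, look at
the coordinate `i` maximising `|vᵢ| / wᵢ`: nonnegativity of `S` gives
`|μ| |vᵢ| ≤ (S |v|)ᵢ ≤ (|vᵢ| / wᵢ) (S w)ᵢ < |vᵢ|` (the Collatz–Wielandt bound), so `|μ| < 1`.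

Conversely, if `ρ(S) < 1`, Gelfand's formula gives a power with `‖S ^ k‖_∞ < 1`, i.e. all row
sums of `S ^ k` below `1`. The weight `w = (1 + S + ⋯ + S ^ (k - 1)) 𝟙` is positive and
satisfies `S w = w - 𝟙 + S ^ k 𝟙 < w`.
-/

open Matrix

noncomputable def specRad {n : Type*} [Fintype n] [DecidableEq n]
    (A : Matrix n n ℂ) : ℝ :=
  sSup ((fun z : ℂ => ‖z‖) '' spectrum ℂ A)

open Filter Finset

variable {ι : Type*} [Fintype ι] [DecidableEq ι]

theorem specRad_lt_iff (A : Matrix ι ι ℂ) {r : ℝ} (hr : 0 < r) :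
    specRad A < r ↔ ∀ z ∈ spectrum ℂ A, ‖z‖ < r := by
  rcases (spectrum ℂ A).eq_empty_or_nonempty with h | h
  · simp [specRad, h, hr]
  · rw [specRad, (A.finite_spectrum.image _).csSup_lt_iff (h.image _), Set.forall_mem_image]

theorem Matrix.exists_mulVec_eq_smul_of_mem_spectrum {K : Type*} [Field K] {A : Matrix ι ι K}
    {μ : K} (h : μ ∈ spectrum K A) : ∃ v, v ≠ 0 ∧ A *ᵥ v = μ • v := by
  rw [← Matrix.spectrum_toLin', ← Module.End.hasEigenvalue_iff_mem_spectrum] at h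
  obtain ⟨v, hv⟩ := h.exists_hasEigenvector
  exact ⟨v, hv.2, by simpa using hv.apply_eq_smul⟩

theorem exists_norm_mul_le_mulVec_of_mem_spectrum {S : Matrix ι ι ℝ} (hS : ∀ i j, 0 ≤ S i j)
    {w : ι → ℝ} (hw : ∀ i, 0 < w i) {μ : ℂ} (hμ : μ ∈ spectrum ℂ (S.map ((↑) : ℝ → ℂ))) :
    ∃ i, ‖μ‖ * w i ≤ (S *ᵥ w) i := by
  obtain ⟨v, hv0, hv⟩ := exists_mulVec_eq_smul_of_mem_spectrum hμ
  obtain ⟨j, hj⟩ := Function.ne_iff.mp hv0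
  have : Nonempty ι := ⟨j⟩
  obtain ⟨i, hi⟩ := Finite.exists_max fun k => ‖v k‖ / w k
  set t := ‖v i‖ / w i
  have ht : 0 < t := (div_pos (norm_pos_iff.mpr hj) (hw j)).trans_le (hi j)
  have hvt : ∀ k, ‖v k‖ ≤ t * w k := fun k => (div_le_iff₀ (hw k)).mp (hi k)
  refine ⟨i, le_of_mul_le_mul_left ?_ ht⟩
  have hti : t * w i = ‖v i‖ := div_mul_cancel₀ _ (hw i).ne'
  calc t * (‖μ‖ * w i) = ‖μ‖ * ‖v i‖ := by rw [mul_left_comm, hti]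
    _ = ‖∑ k, (S i k : ℂ) * v k‖ := by rw [← norm_mul, ← smul_eq_mul, ← Pi.smul_apply, ← hv]; rfl
    _ ≤ ∑ k, S i k * ‖v k‖ := by
      refine (norm_sum_le _ _).trans_eq (sum_congr rfl fun k _ => ?_)
      rw [norm_mul, Complex.norm_real, Real.norm_of_nonneg (hS i k)]
    _ ≤ ∑ k, S i k * (t * w k) := by gcongr with k; exacts [hS i k, hvt k]
    _ = t * (S *ᵥ w) i := by
      simp only [mulVec, dotProduct, mul_sum]
      exact sum_congr rfl fun k _ => by ring

section Gelfand

variable {A : Type*} [NormedRing A] [NormedAlgebra ℂ A] [CompleteSpace A]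

theorem spectrum.eventually_norm_pow_lt_one {a : A} (h : ∀ z ∈ spectrum ℂ a, ‖z‖ < 1) :
    ∀ᶠ k in atTop, ‖a ^ k‖ < 1 := by
  cases subsingleton_or_nontrivial A
  · exact Eventually.of_forall fun k => by simp [Subsingleton.elim (a ^ k) 0]
  have hρ : spectralRadius ℂ a < (1 : NNReal) :=
    spectrum.spectralRadius_lt_of_forall_lt a fun z hz => mod_cast h z hz
  filter_upwards [(spectrum.pow_norm_pow_one_div_tendsto_nhds_spectralRadius a).eventually_lt_const
    (by simpa using hρ), eventually_gt_atTop 0] with k hk hk0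
  rwa [ENNReal.ofReal_lt_one, Real.rpow_lt_one_iff' (norm_nonneg _) (by positivity)] at hk

end Gelfand

section LinftyNorm

attribute [local instance] Matrix.linftyOpNormedRing Matrix.linftyOpNormedAlgebra

theorem mulVec_one_lt_one_of_norm_map_lt_one {S : Matrix ι ι ℝ}
    (h : ‖S.map ((↑) : ℝ → ℂ)‖ < 1) (i : ι) : (S *ᵥ 1) i < 1 := by
  have hone : ‖(1 : ι → ℂ)‖ ≤ 1 := (pi_norm_le_iff_of_nonneg zero_le_one).mpr fun _ => by simp
  calc (S *ᵥ 1) i ≤ ‖(((S *ᵥ 1) i : ℝ) : ℂ)‖ := by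
        rw [Complex.norm_real, Real.norm_eq_abs]; exact le_abs_self _
    _ = ‖(S.map ((↑) : ℝ → ℂ) *ᵥ 1) i‖ := by
      rw [← Complex.ofRealHom_eq_coe, RingHom.map_mulVec]; rfl
    _ ≤ ‖S.map ((↑) : ℝ → ℂ) *ᵥ 1‖ := norm_le_pi_norm _ i
    _ ≤ ‖S.map ((↑) : ℝ → ℂ)‖ * ‖(1 : ι → ℂ)‖ := linfty_opNorm_mulVec _ _
    _ ≤ ‖S.map ((↑) : ℝ → ℂ)‖ := mul_le_of_le_one_right (norm_nonneg _) hone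
    _ < 1 := h

theorem exists_pow_mulVec_one_lt_one {S : Matrix ι ι ℝ}
    (h : ∀ z ∈ spectrum ℂ (S.map ((↑) : ℝ → ℂ)), ‖z‖ < 1) :
    ∃ k ≠ 0, ∀ i, (S ^ k *ᵥ 1) i < 1 := by
  obtain ⟨k, hk, hk0⟩ := ((spectrum.eventually_norm_pow_lt_one h).and (eventually_ne_atTop 0)).exists
  refine ⟨k, hk0, mulVec_one_lt_one_of_norm_map_lt_one ?_⟩
  exact (S.map_pow Complex.ofRealHom k).symm ▸ hk

end LinftyNorm

section OrderedRing

variable {R : Type*} [Ring R] [PartialOrder R] [IsStrictOrderedRing R] {S : Matrix ι ι R}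

theorem exists_pos_mulVec_lt_self_of_pow_mulVec_one_lt (hS : ∀ i j, 0 ≤ S i j) {k : ℕ}
    (hk : k ≠ 0) (h : ∀ i, (S ^ k *ᵥ 1) i < 1) :
    ∃ w : ι → R, (∀ i, 0 < w i) ∧ ∀ i, (S *ᵥ w) i < w i := by
  set G := ∑ m ∈ range k, S ^ m
  have hG : S * G = G + (S ^ k - 1) := by
    rw [← sub_eq_iff_eq_add', ← mul_geom_sum, sub_mul, one_mul]
  refine ⟨G *ᵥ 1, fun i => ?_, fun i => ?_⟩
  · have hterm : ∀ m, 0 ≤ (S ^ m *ᵥ 1) i := fun m =>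
      sum_nonneg fun j _ => mul_nonneg (pow_apply_nonneg hS m i j) zero_le_one
    calc (0 : R) < (S ^ 0 *ᵥ 1) i := by simp
      _ ≤ (G *ᵥ 1) i := by
        rw [sum_mulVec, Finset.sum_apply]
        exact single_le_sum (fun m _ => hterm m) (mem_range.mpr (Nat.pos_of_ne_zero hk))
  · have : S *ᵥ (G *ᵥ 1) = G *ᵥ 1 + (S ^ k *ᵥ 1 - 1) := by
      rw [mulVec_mulVec, hG, add_mulVec, sub_mulVec, one_mulVec]
    rw [this, Pi.add_apply]
    exact add_lt_of_neg_right _ (sub_neg.mpr (h i))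

end OrderedRing

/-- For a nonnegative matrix `S`, there exists a positive weight vector `w` with
weighted-maximum operator norm `max_i (∑ j S i j w j)/w i < 1` iff `ρ(S) < 1`. -/
theorem exists_weight_norm_lt_one_iff_specRad_lt_one {n : ℕ}
    (S : Matrix (Fin n) (Fin n) ℝ) (hS : ∀ i j, 0 ≤ S i j) :
    (∃ w : Fin n → ℝ, (∀ i, 0 < w i) ∧ ∀ i, (∑ j, S i j * w j) / w i < 1) ↔
      specRad (S.map (fun x => (x : ℂ))) < 1 := by
  have hratio : ∀ {w : Fin n → ℝ}, (∀ i, 0 < w i) →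
      ((∀ i, (∑ j, S i j * w j) / w i < 1) ↔ ∀ i, (S *ᵥ w) i < w i) :=
    fun hw => forall_congr' fun i => div_lt_one (hw i)
  rw [specRad_lt_iff _ one_pos]
  constructor
  · rintro ⟨w, hw, hSw⟩ μ hμ
    obtain ⟨i, hi⟩ := exists_norm_mul_le_mulVec_of_mem_spectrum hS hw hμ
    exact (mul_lt_iff_lt_one_left (hw i)).mp (hi.trans_lt ((hratio hw).mp hSw i))
  · intro hσ
    obtain ⟨k, hk0, hk⟩ := exists_pow_mulVec_one_lt_one hσ
    obtain ⟨w, hw, hSw⟩ := exists_pos_mulVec_lt_self_of_pow_mulVec_one_lt hS hk0 hk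
    exact ⟨w, hw, (hratio hw).mpr hSw⟩
end
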